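/- The subring R = {[[a,b],[0,0]] : a ∈ {0,2}, b ∈ ℤ/4ℤ} of M₂(ℤ/4ℤ) satisfies 2xy = 2yx for all x, y ∈ R, yet R is not commutative. Hence the identity 2ab + 2ba = 0 (equivalently 2ab = 2ba in characteristic 4) does not imply commutativity. -/

import Mathlib

def S : Set (Matrix (Fin 2) (Fin 2) (ZMod 4)) :=
  {M | (M 0 0 = 0 ∨ M 0 0 = 2) ∧ M 1 0 = 0 ∧ M 1 1 = 0}

/-! Since second rows vanish, a product `x * y` in `S` is `x 0 0 • y`, and `2 * x 0 0 = 0` in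
`ZMod 4`; so `2xy` and `2yx` are both zero. Yet `2E₀₀ * E₀₁ = 2E₀₁` while `E₀₁ * 2E₀₀ = 0`. -/

namespace Matrix

theorem mul_eq_smul_of_row_one_eq_zero {R : Type*} [CommSemiring R]
    {x y : Matrix (Fin 2) (Fin 2) R} (hx : x 1 = 0) (hy : y 1 = 0) :
    x * y = x 0 0 • y := by
  ext i j
  fin_cases i <;> simp [mul_apply, Fin.sum_univ_two, hx, hy]

end Matrix

theorem row_one_eq_zero_of_mem_S {M : Matrix (Fin 2) (Fin 2) (ZMod 4)} (hM : M ∈ S) :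
    M 1 = 0 := by
  funext j
  fin_cases j
  exacts [hM.2.1, hM.2.2]

theorem mul_add_self_eq_zero_of_mem_S {x y : Matrix (Fin 2) (Fin 2) (ZMod 4)}
    (hx : x ∈ S) (hy : y ∈ S) : x * y + x * y = 0 := by
  have entry_add_self : x 0 0 + x 0 0 = 0 := by
    rcases hx.1 with h | h <;> rw [h] <;> decide
  rw [Matrix.mul_eq_smul_of_row_one_eq_zero (row_one_eq_zero_of_mem_S hx)
    (row_one_eq_zero_of_mem_S hy), ← add_smul, entry_add_self, zero_smul]

/-- S satisfies 2xy = 2yx for all x, y, yet S is not commutative. -/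
theorem stmt_10 :
    (∀ x ∈ S, ∀ y ∈ S, x * y + x * y = y * x + y * x) ∧
    (∃ x ∈ S, ∃ y ∈ S, x * y ≠ y * x) := by
  refine ⟨fun x hx y hy => ?_, ?_⟩
  · rw [mul_add_self_eq_zero_of_mem_S hx hy, mul_add_self_eq_zero_of_mem_S hy hx]
  · refine ⟨!![2, 0; 0, 0], ⟨Or.inr rfl, rfl, rfl⟩, !![0, 1; 0, 0], ⟨Or.inl rfl, rfl, rfl⟩, ?_⟩
    decide
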